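/- Let u be a v-minimal word of a synchronizing automaton 𝒜 and i ∈ supp(u). Then every element g ∈ ℐ_i is u-representable, i.e., there exists a word w that u-represents g. -/

import Mathlib

open scoped BigOperators

set_option synthInstance.maxHeartbeats 1000000
set_option maxHeartbeats 1000000

noncomputable section

/-- Action of a word on a state: `q · u`. -/
def actW {Q A : Type*} (δ : Q → A → Q) (q : Q) (u : List A) : Q :=
  u.foldl δ q

/-- The image `Q · u` of the full state set under a word. -/
def imageSet {Q A : Type*} [Fintype Q] [DecidableEq Q] (δ : Q → A → Q) (u : List A) :
    Finset Q :=
  Finset.image (fun q => actW δ q u) Finset.univ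

/-- The rank `rk(u) = |Q · u|` of a word. -/
def wordRank {Q A : Type*} [Fintype Q] [DecidableEq Q] (δ : Q → A → Q) (u : List A) : ℕ :=
  (imageSet δ u).card

/-- A word is reset (synchronizing) if `|Q · u| = 1`. -/
def IsReset {Q A : Type*} [Fintype Q] [DecidableEq Q] (δ : Q → A → Q) (u : List A) : Prop :=
  wordRank δ u = 1

/-- The automaton is synchronizing if it admits a reset word. -/
def IsSynchronizing {Q A : Type*} [Fintype Q] [DecidableEq Q] (δ : Q → A → Q) : Prop :=
  ∃ u : List A, IsReset δ u

/-- `Syn(𝒜)`, the set of reset words. -/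
def SynWords {Q A : Type*} [Fintype Q] [DecidableEq Q] (δ : Q → A → Q) : Set (List A) :=
  {u | IsReset δ u}

/-- The hyperplane `w⊥ = {v ∈ ℂQ : ∑ q, v q = 0}`. -/
def Wperp (Q : Type*) [Fintype Q] : Submodule ℂ (Q → ℂ) :=
  LinearMap.ker (∑ q : Q, (LinearMap.proj q : (Q → ℂ) →ₗ[ℂ] ℂ))

theorem mem_Wperp {Q : Type*} [Fintype Q] (v : Q → ℂ) :
    v ∈ Wperp Q ↔ ∑ q : Q, v q = 0 := by
  simp [Wperp, LinearMap.mem_ker, LinearMap.sum_apply]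

/-- The (right) action of a word on row vectors `v ↦ v·π(u)`. -/
def piLin {Q A : Type*} [Fintype Q] [DecidableEq Q] (δ : Q → A → Q) (u : List A) :
    (Q → ℂ) →ₗ[ℂ] (Q → ℂ) where
  toFun v := fun p => ∑ q ∈ Finset.univ.filter (fun q => actW δ q u = p), v q
  map_add' := by
    intro a b; funext p; simp [Finset.sum_add_distrib]
  map_smul' := by
    intro c v; funext p; simp [Finset.mul_sum]

theorem piLin_mem {Q A : Type*} [Fintype Q] [DecidableEq Q] (δ : Q → A → Q) (u : List A) :
    ∀ v ∈ Wperp Q, piLin δ u v ∈ Wperp Q := by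
  intro v hv
  rw [mem_Wperp] at hv ⊢
  have h := Finset.sum_fiberwise (Finset.univ : Finset Q) (fun q => actW δ q u) v
  calc ∑ p : Q, piLin δ u v p
      = ∑ p : Q, ∑ q ∈ Finset.univ.filter (fun q => actW δ q u = p), v q := rfl
    _ = ∑ q : Q, v q := h
    _ = 0 := hv

/-- The endomorphism of `w⊥` induced by a word. -/
def rhoEnd {Q A : Type*} [Fintype Q] [DecidableEq Q] (δ : Q → A → Q) (u : List A) :
    Module.End ℂ (Wperp Q) :=
  (piLin δ u).restrict (piLin_mem δ u)

/-- The representation `ρ : Σ* → End(w⊥)`; we record it in the multiplicative opposite so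
that `ρ (u ++ v) = ρ u * ρ v` (the paper's right-action convention). -/
def rho {Q A : Type*} [Fintype Q] [DecidableEq Q] (δ : Q → A → Q) (u : List A) :
    (Module.End ℂ (Wperp Q))ᵐᵒᵖ :=
  MulOpposite.op (rhoEnd δ u)

/-- `ℛ`, the ℂ-subalgebra generated by `ρ(Σ*)`. -/
def Ralg {Q A : Type*} [Fintype Q] [DecidableEq Q] (δ : Q → A → Q) :
    Subalgebra ℂ (Module.End ℂ (Wperp Q))ᵐᵒᵖ :=
  Algebra.adjoin ℂ (Set.range (rho δ))

/-- `ρ(u)` seen as an element of `ℛ`. -/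
def rhoR {Q A : Type*} [Fintype Q] [DecidableEq Q] (δ : Q → A → Q) (u : List A) :
    Ralg δ :=
  ⟨rho δ u, Algebra.subset_adjoin (Set.mem_range_self u)⟩

/-- The Jacobson radical `Rad(ℛ)` of `ℛ`, realised as a subset of the ambient algebra via
the standard characterisation: `x ∈ Rad(ℛ)` iff `x ∈ ℛ` and for every `y ∈ ℛ` the element
`1 - y * x` is left-invertible in `ℛ`. -/
def RadSet {Q A : Type*} [Fintype Q] [DecidableEq Q] (δ : Q → A → Q) :
    Set (Module.End ℂ (Wperp Q))ᵐᵒᵖ :=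
  {x | x ∈ Ralg δ ∧ ∀ y ∈ Ralg δ, ∃ z ∈ Ralg δ, z * (1 - y * x) = 1}

/-- `Rad(𝒜)`: the set of radical words, i.e. words `u` with `ρ(u) ∈ Rad(ℛ)`. -/
def RadWords {Q A : Type*} [Fintype Q] [DecidableEq Q] (δ : Q → A → Q) : Set (List A) :=
  {u | rho δ u ∈ RadSet δ}

/-- The automaton is semisimple when `Rad(𝒜) = Syn(𝒜)`. -/
def IsSemisimple {Q A : Type*} [Fintype Q] [DecidableEq Q] (δ : Q → A → Q) : Prop :=
  RadWords δ = SynWords δ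

/-- The `t`-packing number `D(t,r,n)`: the maximum size of a family of `r`-subsets of an
`n`-set in which every `t`-subset is contained in at most one member. -/
def packingNumber (t r n : ℕ) : ℕ :=
  sSup {m | ∃ F : Finset (Finset (Fin n)), F.card = m ∧ (∀ S ∈ F, S.card = r) ∧
    ∀ T : Finset (Fin n), T.card = t → (F.filter fun S => T ⊆ S).card ≤ 1}

/-- The former-rank `Fr(𝒜)`: the least rank of a non-reset word. -/
def formerRank {Q A : Type*} [Fintype Q] [DecidableEq Q] (δ : Q → A → Q) : ℕ :=
  sInf {m | ∃ u : List A, ¬ IsReset δ u ∧ wordRank δ u = m}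

/-- `Fs(𝒜)`: the set of former-synchronizing words. -/
def Fs {Q A : Type*} [Fintype Q] [DecidableEq Q] (δ : Q → A → Q) : Set (List A) :=
  {u | wordRank δ u = formerRank δ}

/-- `θ_i(u)`: the image of `ρ(u)` in the `i`-th Wedderburn–Artin matrix component, where
`e : ℛ → ∏ i, M_{n_i}(ℂ)` is the quotient map `ψ` followed by the fixed isomorphism. -/
def theta {Q A : Type*} [Fintype Q] [DecidableEq Q] (δ : Q → A → Q) {k : ℕ} {nn : Fin k → ℕ}
    (e : Ralg δ →ₐ[ℂ] ∀ i : Fin k, Matrix (Fin (nn i)) (Fin (nn i)) ℂ)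
    (u : List A) (i : Fin k) : Matrix (Fin (nn i)) (Fin (nn i)) ℂ :=
  e (rhoR δ u) i

/-- `supp(v) = {i : θ_i(v) ≠ 0}`. -/
def suppW {Q A : Type*} [Fintype Q] [DecidableEq Q] (δ : Q → A → Q) {k : ℕ} {nn : Fin k → ℕ}
    (e : Ralg δ →ₐ[ℂ] ∀ i : Fin k, Matrix (Fin (nn i)) (Fin (nn i)) ℂ)
    (v : List A) : Set (Fin k) :=
  {i | theta δ e v i ≠ 0}

/-- `u ∈ Σ* v Σ*`, i.e. `v` is a factor of `u`. -/
def InFactor {A : Type*} (v u : List A) : Prop :=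
  ∃ a b : List A, u = a ++ v ++ b

/-- `u` is a `v`-minimal word: `u ∈ Σ*vΣ*`, `supp(u)` is nonempty, and `supp(u)` is minimal
among the nonempty supports of words in `Σ*vΣ*`. -/
def IsVMinimal {Q A : Type*} [Fintype Q] [DecidableEq Q] (δ : Q → A → Q) {k : ℕ}
    {nn : Fin k → ℕ}
    (e : Ralg δ →ₐ[ℂ] ∀ i : Fin k, Matrix (Fin (nn i)) (Fin (nn i)) ℂ)
    (v u : List A) : Prop :=
  InFactor v u ∧ (suppW δ e u).Nonempty ∧
    ∀ z : List A, InFactor v z → suppW δ e z ⊆ suppW δ e u →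
      suppW δ e z = ∅ ∨ suppW δ e z = suppW δ e u

/-- The `i`-th factor monoid `ℳ_i = θ_i(Σ*)`. -/
def factorMonoid {Q A : Type*} [Fintype Q] [DecidableEq Q] (δ : Q → A → Q) {k : ℕ}
    {nn : Fin k → ℕ}
    (e : Ralg δ →ₐ[ℂ] ∀ i : Fin k, Matrix (Fin (nn i)) (Fin (nn i)) ℂ)
    (i : Fin k) : Set (Matrix (Fin (nn i)) (Fin (nn i)) ℂ) :=
  Set.range fun u : List A => theta δ e u i

/-- A two-sided ideal of the (sub)monoid `M`. -/
def IsSetIdeal {X : Type*} [Mul X] (M I : Set X) : Prop :=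
  I ⊆ M ∧ ∀ a ∈ M, ∀ x ∈ I, a * x ∈ I ∧ x * a ∈ I

/-- `I` is a `0`-minimal (two-sided) ideal of the monoid `M`. -/
def IsZeroMinimalIdeal {X : Type*} [Mul X] [Zero X] (M I : Set X) : Prop :=
  IsSetIdeal M I ∧ (0 : X) ∈ I ∧ I ≠ {0} ∧
    ∀ J : Set X, IsSetIdeal M J → (0 : X) ∈ J → J ⊆ I → J ≠ {0} → J = I

/-- `Rnk_i(g) = min {rk(u) : θ_i(u) = g}`. -/
def rnkElt {Q A : Type*} [Fintype Q] [DecidableEq Q] (δ : Q → A → Q) {k : ℕ}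
    {nn : Fin k → ℕ}
    (e : Ralg δ →ₐ[ℂ] ∀ i : Fin k, Matrix (Fin (nn i)) (Fin (nn i)) ℂ)
    (i : Fin k) (g : Matrix (Fin (nn i)) (Fin (nn i)) ℂ) : ℕ :=
  sInf {m | ∃ u : List A, theta δ e u i = g ∧ wordRank δ u = m}

/-- `Rnk(ℐ_i) = min {Rnk_i(g) : g ∈ ℐ_i ∖ {0}}`. -/
def rnkIdeal {Q A : Type*} [Fintype Q] [DecidableEq Q] (δ : Q → A → Q) {k : ℕ}
    {nn : Fin k → ℕ}
    (e : Ralg δ →ₐ[ℂ] ∀ i : Fin k, Matrix (Fin (nn i)) (Fin (nn i)) ℂ)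
    (i : Fin k) (I : Set (Matrix (Fin (nn i)) (Fin (nn i)) ℂ)) : ℕ :=
  sInf {m | ∃ g ∈ I, g ≠ 0 ∧ rnkElt δ e i g = m}

/-- `w` `u`-represents `g`: `w ∈ Σ*uΣ*`, `θ_i(w) = g`, and either `g = 0` or `rk(w)` is
minimum among all words with the first two properties. -/
def URepresents {Q A : Type*} [Fintype Q] [DecidableEq Q] (δ : Q → A → Q) {k : ℕ}
    {nn : Fin k → ℕ}
    (e : Ralg δ →ₐ[ℂ] ∀ i : Fin k, Matrix (Fin (nn i)) (Fin (nn i)) ℂ)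
    (u : List A) (i : Fin k) (w : List A) (g : Matrix (Fin (nn i)) (Fin (nn i)) ℂ) : Prop :=
  InFactor u w ∧ theta δ e w i = g ∧
    (g = 0 ∨ ∀ w' : List A, InFactor u w' → theta δ e w' i = g → wordRank δ w ≤ wordRank δ w')

/-- The relation `σ_i` on `ℐ_i`. -/
def sigmaRel {Q A : Type*} [Fintype Q] [DecidableEq Q] (δ : Q → A → Q) {k : ℕ}
    {nn : Fin k → ℕ}
    (e : Ralg δ →ₐ[ℂ] ∀ i : Fin k, Matrix (Fin (nn i)) (Fin (nn i)) ℂ)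
    (i : Fin k) (u : List A)
    (g f : Matrix (Fin (nn i)) (Fin (nn i)) ℂ) : Prop :=
  g = f ∨ ∃ w₁ w₂ : List A, URepresents δ e u i w₁ g ∧ URepresents δ e u i w₂ f ∧
    1 < (imageSet δ w₁ ∩ imageSet δ w₂).card

/-- `T ⊆ [1,k]` is a core. -/
def IsCore {Q A : Type*} [Fintype Q] [DecidableEq Q] (δ : Q → A → Q) {k : ℕ}
    {nn : Fin k → ℕ}
    (e : Ralg δ →ₐ[ℂ] ∀ i : Fin k, Matrix (Fin (nn i)) (Fin (nn i)) ℂ)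
    (T : Set (Fin k)) : Prop :=
  ∀ x : List A, (∀ i ∈ T, theta δ e x i = 0) → ∀ i : Fin k, theta δ e x i = 0

/-- A minimal core. -/
def IsMinimalCore {Q A : Type*} [Fintype Q] [DecidableEq Q] (δ : Q → A → Q) {k : ℕ}
    {nn : Fin k → ℕ}
    (e : Ralg δ →ₐ[ℂ] ∀ i : Fin k, Matrix (Fin (nn i)) (Fin (nn i)) ℂ)
    (T : Set (Fin k)) : Prop :=
  IsCore δ e T ∧ ∀ T' : Set (Fin k), T' ⊆ T → IsCore δ e T' → T' = T

/-- An automaton congruence. -/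
def IsCongruence {Q A : Type*} (δ : Q → A → Q) (σ : Q → Q → Prop) : Prop :=
  Equivalence σ ∧ ∀ q p : Q, σ q p → ∀ u : List A, σ (actW δ q u) (actW δ p u)

/-- A simple automaton: the only congruences are the identity and the universal relation. -/
def IsSimple {Q A : Type*} (δ : Q → A → Q) : Prop :=
  ∀ σ : Q → Q → Prop, IsCongruence δ σ → σ = Eq ∨ σ = fun _ _ => True

/-!
Let `z` be a reset word. The set `J = θ_i(Σ*uΣ*)` is an ideal of the finite monoid `ℳ_i`; it
contains `0 = θ_i(uz)` and the nonzero element `θ_i(u)`. Hence `J` contains a `0`-minimal ideal,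
which by uniqueness is `ℐ_i`. So every `g ∈ ℐ_i` is `θ_i(w)` for some `w ∈ Σ*uΣ*`, and a word of
least rank among these `u`-represents `g`.
-/

theorem IsSetIdeal.exists_isZeroMinimalIdeal_subset {X : Type*} [Mul X] [Zero X] {M J : Set X}
    (hM : M.Finite) (hJ : IsSetIdeal M J) (h0 : (0 : X) ∈ J) (hne : J ≠ {0}) :
    ∃ K ⊆ J, IsZeroMinimalIdeal M K := by
  classical
  have hcard : ∃ n, ∃ K, IsSetIdeal M K ∧ (0 : X) ∈ K ∧ K ⊆ J ∧ K ≠ {0} ∧ K.ncard = n :=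
    ⟨_, J, hJ, h0, subset_rfl, hne, rfl⟩
  obtain ⟨K, hK, hK0, hKJ, hKne, hKcard⟩ := Nat.find_spec hcard
  refine ⟨K, hKJ, hK, hK0, hKne, fun K' hK' hK'0 hK'K hK'ne => ?_⟩
  refine Set.eq_of_subset_of_ncard_le hK'K ?_ (hM.subset hK.1)
  exact hKcard ▸ Nat.find_min' hcard ⟨K', hK', hK'0, hK'K.trans hKJ, hK'ne, rfl⟩

theorem actW_append {Q A : Type*} (δ : Q → A → Q) (q : Q) (a b : List A) :
    actW δ q (a ++ b) = actW δ (actW δ q a) b :=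
  List.foldl_append

theorem inFactor_iff_isInfix {A : Type*} {u w : List A} : InFactor u w ↔ u <:+: w :=
  ⟨fun ⟨a, b, h⟩ => ⟨a, b, h.symm⟩, fun ⟨a, b, h⟩ => ⟨a, b, h.symm⟩⟩

section Words

variable {Q A : Type*} [Fintype Q] [DecidableEq Q] (δ : Q → A → Q)

theorem piLin_apply (u : List A) (v : Q → ℂ) (p : Q) :
    piLin δ u v p = ∑ q ∈ Finset.univ.filter (fun q => actW δ q u = p), v q :=
  rfl

theorem piLin_congr {a b : List A} (h : ∀ q, actW δ q a = actW δ q b) : piLin δ a = piLin δ b :=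
  LinearMap.ext fun v => funext fun p => by simp only [piLin_apply, h]

theorem piLin_append (a b : List A) : piLin δ (a ++ b) = piLin δ b ∘ₗ piLin δ a := by
  refine LinearMap.ext fun v => funext fun p => ?_
  simp only [LinearMap.comp_apply, piLin_apply, actW_append]
  rw [Finset.sum_fiberwise_eq_sum_filter]
  simp only [Finset.mem_filter, Finset.mem_univ, true_and]

theorem piLin_eq_zero_of_isReset {z : List A} (hz : IsReset δ z) {v : Q → ℂ} (hv : v ∈ Wperp Q) :
    piLin δ z v = 0 := by
  obtain ⟨p, hp⟩ := Finset.card_eq_one.mp hz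
  have hconst : ∀ q, actW δ q z = p := fun q =>
    Finset.mem_singleton.mp (hp ▸ Finset.mem_image_of_mem _ (Finset.mem_univ q))
  funext r
  rw [piLin_apply]
  by_cases hr : r = p
  · simpa [hr, hconst] using (mem_Wperp v).mp hv
  · simp [hconst, Ne.symm hr]

theorem rhoEnd_append (a b : List A) : rhoEnd δ (a ++ b) = rhoEnd δ b * rhoEnd δ a :=
  LinearMap.ext fun x => Subtype.ext <| LinearMap.congr_fun (piLin_append δ a b) x

theorem rhoR_append (a b : List A) : rhoR δ (a ++ b) = rhoR δ a * rhoR δ b :=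
  Subtype.ext <| congrArg MulOpposite.op (rhoEnd_append δ a b)

theorem rhoR_eq_zero_of_isReset {z : List A} (hz : IsReset δ z) : rhoR δ z = 0 :=
  Subtype.ext <| congrArg MulOpposite.op <|
    LinearMap.ext fun x => Subtype.ext <| piLin_eq_zero_of_isReset δ hz x.2

theorem rhoR_congr {a b : List A} (h : ∀ q, actW δ q a = actW δ q b) : rhoR δ a = rhoR δ b :=
  Subtype.ext <| congrArg MulOpposite.op <|
    LinearMap.ext fun x => Subtype.ext <| LinearMap.congr_fun (piLin_congr δ h) x

variable {k : ℕ} {nn : Fin k → ℕ}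
  (e : Ralg δ →ₐ[ℂ] ∀ i : Fin k, Matrix (Fin (nn i)) (Fin (nn i)) ℂ)

theorem theta_append (a b : List A) (i : Fin k) :
    theta δ e (a ++ b) i = theta δ e a i * theta δ e b i := by
  simp only [theta, rhoR_append, map_mul, Pi.mul_apply]

theorem theta_eq_zero_of_isReset {z : List A} (hz : IsReset δ z) (i : Fin k) :
    theta δ e z i = 0 := by
  simp only [theta, rhoR_eq_zero_of_isReset δ hz, map_zero, Pi.zero_apply]

theorem factorMonoid_finite (i : Fin k) : (factorMonoid δ e i).Finite := by
  -- `θ_i(w)` depends only on the transformation of the finite set `Q` induced by `w`.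
  let action : List A → Q → Q := fun w q => actW δ q w
  refine (Set.finite_range fun f => theta δ e (Function.invFun action f) i).subset ?_
  rintro _ ⟨w, rfl⟩
  refine ⟨action w, ?_⟩
  exact congrArg (· i) (congrArg e
    (rhoR_congr δ (congrFun (Function.invFun_eq (f := action) ⟨w, rfl⟩))))

def factorIdeal (u : List A) (i : Fin k) : Set (Matrix (Fin (nn i)) (Fin (nn i)) ℂ) :=
  (fun w => theta δ e w i) '' {w | InFactor u w}

theorem isSetIdeal_factorIdeal (u : List A) (i : Fin k) :
    IsSetIdeal (factorMonoid δ e i) (factorIdeal δ e u i) := by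
  refine ⟨fun _ ⟨w, _, hw⟩ => ⟨w, hw⟩, ?_⟩
  rintro _ ⟨x, rfl⟩ _ ⟨w, hw, rfl⟩
  rw [Set.mem_ofPred_eq, inFactor_iff_isInfix] at hw
  refine ⟨⟨x ++ w, ?_, theta_append δ e x w i⟩, ⟨w ++ x, ?_, theta_append δ e w x i⟩⟩
  · exact inFactor_iff_isInfix.mpr (hw.trans (List.suffix_append x w).isInfix)
  · exact inFactor_iff_isInfix.mpr (hw.trans (List.prefix_append w x).isInfix)

theorem zero_mem_factorIdeal (hsync : IsSynchronizing δ) (u : List A) (i : Fin k) :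
    0 ∈ factorIdeal δ e u i := by
  obtain ⟨z, hz⟩ := hsync
  refine ⟨u ++ z, ⟨[], z, rfl⟩, ?_⟩
  change theta δ e (u ++ z) i = 0
  rw [theta_append, theta_eq_zero_of_isReset δ e hz, mul_zero]

theorem factorIdeal_ne_singleton_zero {u : List A} {i : Fin k} (hi : i ∈ suppW δ e u) :
    factorIdeal δ e u i ≠ {0} := fun h =>
  hi <| Set.mem_singleton_iff.mp <| h ▸ ⟨u, ⟨[], [], by simp⟩, rfl⟩

theorem exists_uRepresents {u : List A} {i : Fin k} {g : Matrix (Fin (nn i)) (Fin (nn i)) ℂ}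
    (hg : g ∈ factorIdeal δ e u i) : ∃ w, URepresents δ e u i w g := by
  classical
  have hrank : ∃ m, ∃ w, InFactor u w ∧ theta δ e w i = g ∧ wordRank δ w = m :=
    let ⟨w, hw, hθ⟩ := hg
    ⟨_, w, hw, hθ, rfl⟩
  obtain ⟨w, hw, hθ, hr⟩ := Nat.find_spec hrank
  exact ⟨w, hw, hθ, Or.inr fun w' hw' hθ' => hr ▸ Nat.find_min' hrank ⟨w', hw', hθ', rfl⟩⟩

end Words

theorem stmt12_general {Q A : Type*} [Fintype Q] [DecidableEq Q] (δ : Q → A → Q)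
    {k : ℕ} {nn : Fin k → ℕ}
    (e : Ralg δ →ₐ[ℂ] ∀ i : Fin k, Matrix (Fin (nn i)) (Fin (nn i)) ℂ)
    (Ii : ∀ i : Fin k, Set (Matrix (Fin (nn i)) (Fin (nn i)) ℂ))
    (hIuniq : ∀ (i : Fin k) (J : Set (Matrix (Fin (nn i)) (Fin (nn i)) ℂ)),
      IsZeroMinimalIdeal (factorMonoid δ e i) J → J = Ii i)
    (hsync : IsSynchronizing δ)
    (u : List A) (i : Fin k) (hi : i ∈ suppW δ e u)
    (g : Matrix (Fin (nn i)) (Fin (nn i)) ℂ) (hg : g ∈ Ii i) :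
    ∃ w : List A, URepresents δ e u i w g := by
  obtain ⟨K, hKJ, hK⟩ := (isSetIdeal_factorIdeal δ e u i).exists_isZeroMinimalIdeal_subset
    (factorMonoid_finite δ e i) (zero_mem_factorIdeal δ e hsync u i)
    (factorIdeal_ne_singleton_zero δ e hi)
  exact exists_uRepresents δ e (hKJ (hIuniq i K hK ▸ hg))

theorem stmt12 {Q A : Type*} [Fintype Q] [DecidableEq Q] (δ : Q → A → Q)
    {k : ℕ} {nn : Fin k → ℕ}
    (e : Ralg δ →ₐ[ℂ] ∀ i : Fin k, Matrix (Fin (nn i)) (Fin (nn i)) ℂ)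
    (he_surj : Function.Surjective e)
    (he_ker : ∀ x : Ralg δ, e x = 0 ↔ (x : (Module.End ℂ (Wperp Q))ᵐᵒᵖ) ∈ RadSet δ)
    (Ii : ∀ i : Fin k, Set (Matrix (Fin (nn i)) (Fin (nn i)) ℂ))
    (hIi : ∀ i : Fin k, IsZeroMinimalIdeal (factorMonoid δ e i) (Ii i))
    (hIuniq : ∀ (i : Fin k) (J : Set (Matrix (Fin (nn i)) (Fin (nn i)) ℂ)),
      IsZeroMinimalIdeal (factorMonoid δ e i) J → J = Ii i)
    (hsync : IsSynchronizing δ)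
    (v u : List A) (hu : IsVMinimal δ e v u) (i : Fin k) (hi : i ∈ suppW δ e u)
    (g : Matrix (Fin (nn i)) (Fin (nn i)) ℂ) (hg : g ∈ Ii i) :
    ∃ w : List A, URepresents δ e u i w g :=
  stmt12_general δ e Ii hIuniq hsync u i hi g hg
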